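/- Let M be a compact smooth manifold and E a smooth complex vector bundle of finite rank over M. Then the space Γ^∞(E) of smooth global sections of E is a finitely generated projective module over the algebra C^∞(M,ℂ) of smooth complex-valued functions on M. -/

import Mathlib

open Bundle Manifold
open scoped TensorProduct

local notation "∞" => (⊤ : ℕ∞)

noncomputable section

/-- Complex multiplication and addition are smooth over `ℝ`, so that the complex-valued smooth
functions on a real manifold form a (comm)ring. -/
instance : ContMDiffRing 𝓘(ℝ, ℂ) ∞ ℂ where
  contMDiff_add := by
    rw [contMDiff_iff]
    refine ⟨continuous_add, fun x y => ?_⟩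
    simp only [mfld_simps]
    exact contDiff_add.contDiffOn
  contMDiff_mul := by
    rw [contMDiff_iff]
    refine ⟨continuous_mul, fun x y => ?_⟩
    simp only [mfld_simps]
    exact contDiff_mul.contDiffOn

variable {EM : Type*} [NormedAddCommGroup EM] [NormedSpace ℝ EM] [FiniteDimensional ℝ EM]
  {HM : Type*} [TopologicalSpace HM] {IM : ModelWithCorners ℝ EM HM}
  {M : Type*} [TopologicalSpace M] [ChartedSpace HM M] [IsManifold IM ∞ M]
  [T2Space M] [SecondCountableTopology M] [CompactSpace M]

/-- The constant functions make the smooth complex-valued functions a `ℂ`-algebra. -/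
instance : Algebra ℂ C^∞⟮IM, M; 𝓘(ℝ, ℂ), ℂ⟯ :=
  RingHom.toAlgebra
    { toFun := fun c => ⟨fun _ => c, contMDiff_const⟩
      map_one' := rfl
      map_mul' := fun _ _ => rfl
      map_zero' := rfl
      map_add' := fun _ _ => rfl }

variable {F : Type*} [NormedAddCommGroup F] [NormedSpace ℂ F] [FiniteDimensional ℂ F]
  {V : M → Type*} [TopologicalSpace (TotalSpace F V)]
  [∀ x, AddCommGroup (V x)] [∀ x, Module ℂ (V x)] [∀ x, TopologicalSpace (V x)]
  [FiberBundle F V] [VectorBundle ℂ F V] [VectorBundle ℝ F V] [ContMDiffVectorBundle ∞ F V IM]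

/-- Pointwise scalar multiplication of a smooth section by a smooth function. -/
instance ContMDiffSection.instSMulSmoothMap :
    SMul C^∞⟮IM, M; 𝓘(ℝ, ℂ), ℂ⟯ Cₛ^∞⟮IM; F, V⟯ := by
  refine ⟨fun f s => ⟨fun x => f x • s x, ?_⟩⟩
  intro x₀
  have hs := s.contMDiff x₀
  have hf : ContMDiffAt IM 𝓘(ℝ, ℂ) ∞ f x₀ := f.contMDiff x₀
  rw [contMDiffAt_section] at hs ⊢
  set e := trivializationAt F V x₀
  have h1 : ContMDiffAt IM 𝓘(ℝ, F →L[ℝ] F) ∞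
      (fun x => (ContinuousLinearMap.lsmul ℝ ℂ (f x) : F →L[ℝ] F)) x₀ :=
    ContDiff.comp_contMDiffAt
      (g := ⇑(ContinuousLinearMap.lsmul ℝ ℂ : ℂ →L[ℝ] F →L[ℝ] F))
      (ContinuousLinearMap.contDiff _) hf
  refine (h1.clm_apply hs).congr_of_eventuallyEq ?_
  refine Filter.eventually_of_mem
    (e.open_baseSet.mem_nhds <| mem_baseSet_trivializationAt F V x₀) ?_
  intro x hx
  simp only [ContinuousLinearMap.lsmul_apply]
  exact (e.linear ℂ hx).2 (f x) (s x)

set_option linter.unusedSectionVars false in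
@[simp]
theorem ContMDiffSection.coe_smul_smoothMap (f : C^∞⟮IM, M; 𝓘(ℝ, ℂ), ℂ⟯)
    (s : Cₛ^∞⟮IM; F, V⟯) (x : M) : (f • s) x = f x • s x :=
  rfl

/-- The smooth sections of a smooth complex vector bundle form a module over the algebra of
smooth complex-valued functions on the base. -/
instance ContMDiffSection.instModuleSmoothMap :
    Module C^∞⟮IM, M; 𝓘(ℝ, ℂ), ℂ⟯ Cₛ^∞⟮IM; F, V⟯ where
  one_smul s := ContMDiffSection.ext fun x => one_smul ℂ (s x)
  mul_smul f g s := ContMDiffSection.ext fun x => mul_smul (f x) (g x) (s x)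
  smul_zero f := ContMDiffSection.ext fun x => smul_zero (f x)
  smul_add f s t := ContMDiffSection.ext fun x => smul_add (f x) (s x) (t x)
  add_smul f g s := ContMDiffSection.ext fun x => add_smul (f x) (g x) (s x)
  zero_smul s := ContMDiffSection.ext fun x => zero_smul ℂ (s x)

instance ContMDiffSection.instModuleComplex : Module ℂ Cₛ^∞⟮IM; F, V⟯ :=
  Module.compHom _ (algebraMap ℂ C^∞⟮IM, M; 𝓘(ℝ, ℂ), ℂ⟯)

instance ContMDiffSection.instIsScalarTowerComplex :
    IsScalarTower ℂ C^∞⟮IM, M; 𝓘(ℝ, ℂ), ℂ⟯ Cₛ^∞⟮IM; F, V⟯ :=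
  ⟨fun c f s => by
    show (c • f) • s = algebraMap ℂ C^∞⟮IM, M; 𝓘(ℝ, ℂ), ℂ⟯ c • f • s
    rw [Algebra.smul_def, mul_smul]⟩

/-!
Cover `M` by finitely many trivializing sets `U_j` and choose smooth `ρ_j, g_j` supported in
`U_j` with `∑ ρ_j g_j = 1` (a partition of unity `ρ` and `g_j = ρ_j / ∑ ρ_i²`). For a basis `b`
of the fiber, the sections `σ_{j,i} = ρ_j e_j⁻¹(b_i)` and the `C^∞(M, ℂ)`-linear forms
`c_{j,i}(s) = g_j b_i^*(e_j s)` satisfy `∑ c_{j,i}(s) σ_{j,i} = s`, so `Γ(E)` is a direct summand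
of a finite free module.
-/

theorem Module.finite_and_projective_of_sum_smul_eq {R N ι : Type*} [Semiring R] [AddCommMonoid N]
    [Module R N] [Fintype ι] (c : ι → N →ₗ[R] R) (σ : ι → N) (h : ∀ s, ∑ i, c i s • σ i = s) :
    Module.Finite R N ∧ Module.Projective R N := by
  have hsplit : (Fintype.linearCombination R σ).comp (LinearMap.pi c) = LinearMap.id :=
    LinearMap.ext h
  exact ⟨Module.Finite.of_surjective (Fintype.linearCombination R σ)
    fun s => ⟨LinearMap.pi c s, h s⟩, Module.Projective.of_split _ _ hsplit⟩

theorem Bundle.Trivialization.sum_coord_linearMapAt_smul_symm {R M F : Type*} {V : M → Type*}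
    [Semiring R] [TopologicalSpace M] [TopologicalSpace F] [AddCommMonoid F] [Module R F]
    [TopologicalSpace (TotalSpace F V)] [∀ x, AddCommMonoid (V x)] [∀ x, Module R (V x)]
    (e : Trivialization F (π F V)) [e.IsLinear R] {ι : Type*} [Fintype ι]
    (b : Module.Basis ι R F) {x : M} (hx : x ∈ e.baseSet) (w : V x) :
    ∑ i, b.coord i (e.linearMapAt R x w) • e.symm x (b i) = w := by
  simp_rw [← e.coe_symmₗ (R := R) hx, ← map_smul, ← map_sum, Module.Basis.coord_apply,
    b.sum_repr, e.symmₗ_linearMapAt hx]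

theorem PartitionOfUnity.sum_sq_pos {ι X : Type*} [TopologicalSpace X] [Fintype ι] {s : Set X}
    (ρ : PartitionOfUnity ι X s) {x : X} (hx : x ∈ s) : 0 < ∑ i, ρ i x ^ 2 := by
  have hsum : ∑ i, ρ i x = 1 := by rw [← finsum_eq_sum_of_fintype, ρ.sum_eq_one hx]
  have hcs := sq_sum_le_card_mul_sum_sq (s := Finset.univ) (f := fun i => ρ i x)
  rw [hsum, one_pow] at hcs
  exact pos_of_mul_pos_right (one_pos.trans_le hcs) (Nat.cast_nonneg _)

theorem exists_finset_smooth_sum_mul_eq_one {E : Type*} [NormedAddCommGroup E]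
    [NormedSpace ℝ E] [FiniteDimensional ℝ E] {H : Type*} [TopologicalSpace H]
    {I : ModelWithCorners ℝ E H} {M : Type*} [TopologicalSpace M] [ChartedSpace H M]
    [IsManifold I ∞ M] [T2Space M] [CompactSpace M] {U : M → Set M} (hU : ∀ x, IsOpen (U x))
    (hxU : ∀ x, x ∈ U x) :
    ∃ (t : Finset M) (ρ g : t → C^∞⟮I, M; ℝ⟯), (∀ j, tsupport (ρ j) ⊆ U j) ∧
      (∀ j, tsupport (g j) ⊆ U j) ∧ ∀ x, ∑ j, ρ j x * g j x = 1 := by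
  obtain ⟨t, ht⟩ := isCompact_univ.elim_finite_subcover U hU
    fun x _ => Set.mem_iUnion.2 ⟨x, hxU x⟩
  obtain ⟨ρ, hρU⟩ := SmoothPartitionOfUnity.exists_isSubordinate I isClosed_univ
    (fun j : t => U j) (fun j => hU j) (by simpa [Set.iUnion_subtype] using ht)
  set S : M → ℝ := fun x => ∑ j, ρ j x ^ 2
  have hS : ContMDiff I 𝓘(ℝ) ∞ S :=
    contMDiff_finsetSum fun j _ => (ρ j).contMDiff.pow 2
  have hS0 : ∀ x, S x ≠ 0 := fun x => (ρ.toPartitionOfUnity.sum_sq_pos (Set.mem_univ x)).ne'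
  refine ⟨t, fun j => ρ j, fun j => ⟨fun x => ρ j x * (S x)⁻¹,
    (ρ j).contMDiff.mul (hS.inv₀ hS0)⟩, hρU, fun j => ?_, fun x => ?_⟩
  · exact tsupport_mul_subset_left.trans (hρU j)
  · simp only [ContMDiffMap.coeFn_mk, ← mul_assoc, ← Finset.sum_mul, ← sq]
    exact mul_inv_cancel₀ (hS0 x)

section SmoothSections

variable {𝕜 : Type*} [NontriviallyNormedField 𝕜] {E : Type*} [NormedAddCommGroup E]
  [NormedSpace 𝕜 E] {H : Type*} [TopologicalSpace H] {I : ModelWithCorners 𝕜 E H}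
  {M : Type*} [TopologicalSpace M] [ChartedSpace H M]
  {F : Type*} [NormedAddCommGroup F] [NormedSpace 𝕜 F] {n : WithTop ℕ∞}
  {V : M → Type*} [TopologicalSpace (TotalSpace F V)] [∀ x, AddCommGroup (V x)]
  [∀ x, Module 𝕜 (V x)] [∀ x, TopologicalSpace (V x)] [FiberBundle F V] [VectorBundle 𝕜 F V]

theorem ContMDiffSection.coe_sum {ι : Type*} (t : Finset ι) (s : ι → Cₛ^n⟮I; F, V⟯) :
    ⇑(∑ i ∈ t, s i) = ∑ i ∈ t, ⇑(s i) :=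
  map_sum (ContMDiffSection.coeAddHom I F n V) s t

namespace Bundle.Trivialization

variable [ContMDiffVectorBundle n F V I] (e : Trivialization F (π F V)) [MemTrivializationAtlas e]

theorem contMDiffOn_symm_apply (v : F) :
    ContMDiffOn I (I.prod 𝓘(𝕜, F)) n (fun x => TotalSpace.mk' F x (e.symm x v)) e.baseSet := by
  rw [e.contMDiffOn_section_baseSet_iff]
  exact contMDiffOn_const.congr fun x hx => by rw [e.apply_mk_symm hx]

def cutoffSection (ψ : C^n⟮I, M; 𝕜⟯) (hψ : tsupport ψ ⊆ e.baseSet) (v : F) :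
    Cₛ^n⟮I; F, V⟯ :=
  ⟨fun x => ψ x • e.symm x v,
    ψ.contMDiff.contMDiffOn.smul_section_of_tsupport e.open_baseSet hψ (e.contMDiffOn_symm_apply v)⟩

@[simp]
theorem cutoffSection_apply (ψ : C^n⟮I, M; 𝕜⟯) (hψ : tsupport ψ ⊆ e.baseSet) (v : F) (x : M) :
    e.cutoffSection ψ hψ v x = ψ x • e.symm x v :=
  rfl

theorem contMDiff_smul_linearMapAt_of_tsupport (R : Type*) [Semiring R] [Module R F]
    [∀ x, Module R (V x)] [e.IsLinear R] {G : Type*} [NormedAddCommGroup G] [NormedSpace 𝕜 G]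
    {ψ : M → 𝕜} (hψ : ContMDiff I 𝓘(𝕜) n ψ) (hψe : tsupport ψ ⊆ e.baseSet)
    (φ : F →L[𝕜] G) {s : ∀ x, V x}
    (hs : ContMDiff I (I.prod 𝓘(𝕜, F)) n fun x => TotalSpace.mk' F x (s x)) :
    ContMDiff I 𝓘(𝕜, G) n fun x => ψ x • φ (e.linearMapAt R x (s x)) := by
  refine contMDiff_of_tsupport fun x hx => ?_
  have hxe : x ∈ e.baseSet := hψe (tsupport_smul_subset_left _ _ hx)
  have hcoord : ContMDiffAt I 𝓘(𝕜, F) n (fun y => (e ⟨y, s y⟩).2) x :=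
    ((e.contMDiffOn_section_baseSet_iff.mp hs.contMDiffOn) x hxe).contMDiffAt
      (e.open_baseSet.mem_nhds hxe)
  refine ((hψ x).smul (φ.contMDiff.contMDiffAt.comp x hcoord)).congr_of_eventuallyEq ?_
  filter_upwards [e.open_baseSet.mem_nhds hxe] with y hy
  rw [e.coe_linearMapAt_of_mem (R := R) hy]
  rfl

end Bundle.Trivialization

end SmoothSections

section ComplexSections

variable {E : Type*} [NormedAddCommGroup E] [NormedSpace ℝ E]
  {H : Type*} [TopologicalSpace H] {I : ModelWithCorners ℝ E H}
  {M : Type*} [TopologicalSpace M] [ChartedSpace H M]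
  {F : Type*} [NormedAddCommGroup F] [NormedSpace ℂ F]
  {V : M → Type*} [TopologicalSpace (TotalSpace F V)] [∀ x, AddCommGroup (V x)]
  [∀ x, Module ℂ (V x)] [∀ x, TopologicalSpace (V x)] [FiberBundle F V] [VectorBundle ℂ F V]
  [VectorBundle ℝ F V] [ContMDiffVectorBundle ∞ F V I]

namespace Bundle.Trivialization

variable (e : Trivialization F (π F V)) [MemTrivializationAtlas e]

def cutoffCoord (ψ : C^∞⟮I, M; ℝ⟯) (hψ : tsupport ψ ⊆ e.baseSet) (φ : F →L[ℂ] ℂ) :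
    Cₛ^∞⟮I; F, V⟯ →ₗ[C^∞⟮I, M; 𝓘(ℝ, ℂ), ℂ⟯] C^∞⟮I, M; 𝓘(ℝ, ℂ), ℂ⟯ where
  -- `linearMapAt` rather than `(e ⟨x, s x⟩).2`: it is linear also off `e.baseSet`.
  toFun s := ⟨fun x => ψ x • φ (e.linearMapAt ℂ x (s x)),
    e.contMDiff_smul_linearMapAt_of_tsupport ℂ ψ.contMDiff hψ (φ.restrictScalars ℝ)
      s.contMDiff⟩
  map_add' s t := by
    ext x
    change ψ x • φ (e.linearMapAt ℂ x (s x + t x)) =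
      ψ x • φ (e.linearMapAt ℂ x (s x)) + ψ x • φ (e.linearMapAt ℂ x (t x))
    rw [map_add, map_add, smul_add]
  map_smul' f s := by
    ext x
    change ψ x • φ (e.linearMapAt ℂ x (f x • s x)) = f x * ψ x • φ (e.linearMapAt ℂ x (s x))
    rw [map_smul, map_smul, smul_eq_mul, mul_smul_comm]

@[simp]
theorem cutoffCoord_apply (ψ : C^∞⟮I, M; ℝ⟯) (hψ : tsupport ψ ⊆ e.baseSet) (φ : F →L[ℂ] ℂ)
    (s : Cₛ^∞⟮I; F, V⟯) (x : M) :
    e.cutoffCoord ψ hψ φ s x = ψ x • φ (e.linearMapAt ℂ x (s x)) :=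
  rfl

variable [FiniteDimensional ℂ F]

theorem sum_cutoffCoord_smul_cutoffSection_apply {ι : Type*} [Fintype ι]
    (b : Module.Basis ι ℂ F) {ρ g : C^∞⟮I, M; ℝ⟯} (hρ : tsupport ρ ⊆ e.baseSet)
    (hg : tsupport g ⊆ e.baseSet) (s : Cₛ^∞⟮I; F, V⟯) (x : M) :
    ∑ i, e.cutoffCoord g hg (b.coord i).toContinuousLinearMap s x •
        e.cutoffSection ρ hρ (b i) x = (ρ x * g x) • s x := by
  by_cases hx : x ∈ e.baseSet
  · have hterm : ∀ i, e.cutoffCoord g hg (b.coord i).toContinuousLinearMap s x •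
          e.cutoffSection ρ hρ (b i) x =
        (ρ x * g x) • (b.coord i (e.linearMapAt ℂ x (s x)) • e.symm x (b i)) := fun i => by
      rw [cutoffCoord_apply, cutoffSection_apply, LinearMap.coe_toContinuousLinearMap',
        smul_assoc, smul_comm (b.coord i _), smul_smul, mul_comm]
    rw [Finset.sum_congr rfl fun i _ => hterm i, ← Finset.smul_sum,
      e.sum_coord_linearMapAt_smul_symm b hx]
  · have hρx : ρ x = 0 := image_eq_zero_of_notMem_tsupport fun h => hx (hρ h)
    simp [hρx]

end Bundle.Trivialization

theorem sum_cutoffCoord_smul_cutoffSection [FiniteDimensional ℂ F] {ι κ : Type*} [Fintype ι]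
    [Fintype κ] (e : ι → Trivialization F (π F V)) [∀ j, MemTrivializationAtlas (e j)]
    {ρ g : ι → C^∞⟮I, M; ℝ⟯} (hρ : ∀ j, tsupport (ρ j) ⊆ (e j).baseSet)
    (hg : ∀ j, tsupport (g j) ⊆ (e j).baseSet) (hρg : ∀ x, ∑ j, ρ j x * g j x = 1)
    (b : Module.Basis κ ℂ F) (s : Cₛ^∞⟮I; F, V⟯) :
    ∑ p : ι × κ, (e p.1).cutoffCoord (g p.1) (hg p.1) (b.coord p.2).toContinuousLinearMap s •
      (e p.1).cutoffSection (ρ p.1) (hρ p.1) (b p.2) = s := by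
  ext x
  have smul_apply : ∀ (f : C^∞⟮I, M; 𝓘(ℝ, ℂ), ℂ⟯) (σ : Cₛ^∞⟮I; F, V⟯), (f • σ) x = f x • σ x :=
    fun _ _ => rfl
  simp only [ContMDiffSection.coe_sum, Finset.sum_apply, Fintype.sum_prod_type, smul_apply]
  rw [Finset.sum_congr rfl fun j _ =>
      (e j).sum_cutoffCoord_smul_cutoffSection_apply b (hρ j) (hg j) s x,
    ← Finset.sum_smul, hρg, one_smul]

end ComplexSections

theorem sections_finite_projective :
    Module.Finite C^∞⟮IM, M; 𝓘(ℝ, ℂ), ℂ⟯ Cₛ^∞⟮IM; F, V⟯ ∧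
      Module.Projective C^∞⟮IM, M; 𝓘(ℝ, ℂ), ℂ⟯ Cₛ^∞⟮IM; F, V⟯ := by
  obtain ⟨t, ρ, g, hρ, hg, hρg⟩ := exists_finset_smooth_sum_mul_eq_one (I := IM)
    (fun x => (trivializationAt F V x).open_baseSet) (mem_baseSet_trivializationAt F V)
  exact Module.finite_and_projective_of_sum_smul_eq _ _
    (sum_cutoffCoord_smul_cutoffSection (fun j : t => trivializationAt F V j) hρ hg hρg
      (Module.finBasis ℂ F))
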